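/- Let S⁺, S⁻ be linear maps on d×d matrices with ‖S⁺‖_{∞→∞} ≤ s and ‖S⁻‖_{∞→∞} ≤ s for some s > 0. Define ∇⁽¹⁾ := identity and recursively ∇⁽ᵏ⁾[M] := ∑_{p=1}^{k-1} (S⁺ ∘ ∇⁽ᵖ⁾)[M] · (S⁻ ∘ ∇⁽ᵏ⁻ᵖ⁾)[M] for k ≥ 2 (matrix product). If ‖M‖ ≤ x/(4s²) for some x > 0, then ‖∇⁽ᵏ⁾[M]‖ ≤ (a_k/(2s²)) x^k for all k ≥ 1, where a_k = (-1)^{k+1} binom(1/2,k) are the Taylor coefficients of 1 - sqrt(1-x). -/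

import Mathlib

/-! The bound is the `k`-th term of a scalar majorant: the sequence
`b k = a_k xᵏ / (2 s²)` satisfies `b k = ∑ (s b_p) (s b_{k-p})`, which is exactly the
recursion of `∇⁽ᵏ⁾` after taking norms, because `2 a_k = ∑ a_p a_{k-p}`. The latter holds
since `a_{k+1} = C_k / (2 · 4ᵏ)` with `C_k` the Catalan numbers. -/

open Matrix

/-- The `ℓ₂ → ℓ₂` operator (spectral) norm of a square complex matrix. -/
noncomputable def opNorm {n : Type*} [Fintype n] [DecidableEq n]
    (A : Matrix n n ℂ) : ℝ :=
  ‖LinearMap.toContinuousLinearMap (Matrix.toEuclideanLin A)‖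

/-- `aCoeff k = (-1)^(k+1) * binom(1/2, k)`, the Taylor coefficients of
`1 - sqrt (1 - x)`. -/
noncomputable def aCoeff (k : ℕ) : ℝ :=
  (-1 : ℝ) ^ (k + 1) * ((∏ i ∈ Finset.range k, ((1 : ℝ) / 2 - (i : ℝ))) / (k.factorial : ℝ))

open Finset

open scoped Matrix.Norms.L2Operator

theorem norm_le_of_eq_sum_mul {R : Type*} [NonUnitalSeminormedRing R] {Sp Sm : R → R}
    {sp sm : ℝ} (hsp : 0 ≤ sp) (hsm : 0 ≤ sm)
    (hSp : ∀ A, ‖Sp A‖ ≤ sp * ‖A‖) (hSm : ∀ A, ‖Sm A‖ ≤ sm * ‖A‖)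
    {f : ℕ → R} {b : ℕ → ℝ}
    (hf : ∀ k, 2 ≤ k → f k = ∑ p ∈ Ico 1 k, Sp (f p) * Sm (f (k - p)))
    (hb : ∀ k, 2 ≤ k → b k = ∑ p ∈ Ico 1 k, sp * b p * (sm * b (k - p)))
    (h1 : ‖f 1‖ ≤ b 1) : ∀ k, 1 ≤ k → ‖f k‖ ≤ b k := by
  intro k
  induction k using Nat.strong_induction_on with
  | _ k ih =>
    intro hk
    obtain rfl | hk2 := hk.eq_or_lt
    · exact h1
    rw [hf k hk2, hb k hk2]
    refine (norm_sum_le _ _).trans (sum_le_sum fun p hp => ?_)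
    obtain ⟨hp1, hpk⟩ := mem_Ico.mp hp
    have hbp : ‖Sp (f p)‖ ≤ sp * b p :=
      (hSp _).trans (mul_le_mul_of_nonneg_left (ih p hpk hp1) hsp)
    have hbq : ‖Sm (f (k - p))‖ ≤ sm * b (k - p) :=
      (hSm _).trans (mul_le_mul_of_nonneg_left (ih (k - p) (by omega) (by omega)) hsm)
    exact (norm_mul_le _ _).trans
      (mul_le_mul hbp hbq (norm_nonneg _) ((norm_nonneg _).trans hbp))

theorem aCoeff_one : aCoeff 1 = 1 / 2 := by
  simp [aCoeff]

theorem aCoeff_succ_succ (k : ℕ) :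
    aCoeff (k + 2) = aCoeff (k + 1) * (2 * k + 1) / (2 * (k + 2)) := by
  unfold aCoeff
  rw [prod_range_succ _ (k + 1), Nat.factorial_succ (k + 1)]
  push_cast
  field_simp
  ring

theorem aCoeff_succ_eq_centralBinom (k : ℕ) :
    aCoeff (k + 1) = k.centralBinom / (2 * 4 ^ k * (k + 1)) := by
  induction k with
  | zero => simp [aCoeff_one]
  | succ k ih =>
    have hc : ((k : ℝ) + 1) * (k + 1).centralBinom = 2 * (2 * k + 1) * k.centralBinom := by
      exact_mod_cast Nat.succ_mul_centralBinom_succ k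
    rw [aCoeff_succ_succ, ih]
    push_cast
    field_simp
    linear_combination -2 * 4 ^ k * ((k : ℝ) + 2) * hc

theorem aCoeff_succ_eq_catalan (k : ℕ) : aCoeff (k + 1) = catalan k / (2 * 4 ^ k) := by
  rw [aCoeff_succ_eq_centralBinom, ← succ_mul_catalan_eq_centralBinom]
  push_cast
  field_simp

theorem two_mul_aCoeff_add_two (m : ℕ) :
    2 * aCoeff (m + 2) = ∑ ij ∈ antidiagonal m, aCoeff (ij.1 + 1) * aCoeff (ij.2 + 1) := by
  rw [aCoeff_succ_eq_catalan, catalan_succ', Nat.cast_sum, sum_div, mul_sum]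
  refine sum_congr rfl fun ij hij => ?_
  rw [aCoeff_succ_eq_catalan, aCoeff_succ_eq_catalan, ← mem_antidiagonal.mp hij, pow_add]
  push_cast
  field_simp
  ring

theorem two_mul_aCoeff (k : ℕ) (hk : 2 ≤ k) :
    2 * aCoeff k = ∑ p ∈ Ico 1 k, aCoeff p * aCoeff (k - p) := by
  obtain ⟨m, rfl⟩ := Nat.exists_eq_add_of_le' hk
  rw [two_mul_aCoeff_add_two, Nat.sum_antidiagonal_eq_sum_range_succ
    (fun i j => aCoeff (i + 1) * aCoeff (j + 1)), sum_Ico_eq_sum_range]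
  refine sum_congr (by simp) fun i hi => ?_
  have : i ≤ m := Nat.lt_succ_iff.mp (mem_range.mp hi)
  rw [add_comm 1 i, show m + 2 - (i + 1) = m - i + 1 by omega]

theorem aCoeff_div_mul_pow_eq_sum {s : ℝ} (hs : s ≠ 0) (x : ℝ) (k : ℕ) (hk : 2 ≤ k) :
    aCoeff k / (2 * s ^ 2) * x ^ k = ∑ p ∈ Ico 1 k, s * (aCoeff p / (2 * s ^ 2) * x ^ p) *
      (s * (aCoeff (k - p) / (2 * s ^ 2) * x ^ (k - p))) := by
  have hterm : ∀ p ∈ Ico 1 k,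
      s * (aCoeff p / (2 * s ^ 2) * x ^ p) * (s * (aCoeff (k - p) / (2 * s ^ 2) * x ^ (k - p))) =
        aCoeff p * aCoeff (k - p) * (x ^ k / (4 * s ^ 2)) := by
    intro p hp
    rw [← Nat.add_sub_cancel' (mem_Ico.mp hp).2.le, pow_add, Nat.add_sub_cancel_left]
    field_simp
    ring
  rw [sum_congr rfl hterm, ← sum_mul, ← two_mul_aCoeff k hk]
  field_simp
  ring

theorem opNorm_eq_norm {n : Type*} [Fintype n] [DecidableEq n] (A : Matrix n n ℂ) :
    opNorm A = ‖A‖ := rfl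

theorem recursive_nabla_norm_bound_general (d : ℕ)
    (Sp Sm : Matrix (Fin d) (Fin d) ℂ →ₗ[ℂ] Matrix (Fin d) (Fin d) ℂ)
    (s x : ℝ) (hs : 0 < s)
    (hSp : ∀ A, opNorm (Sp A) ≤ s * opNorm A)
    (hSm : ∀ A, opNorm (Sm A) ≤ s * opNorm A)
    (M : Matrix (Fin d) (Fin d) ℂ) (hM : opNorm M ≤ x / (4 * s ^ 2))
    (nabla : ℕ → Matrix (Fin d) (Fin d) ℂ)
    (hn1 : nabla 1 = M)
    (hnk : ∀ k, 2 ≤ k →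
      nabla k = ∑ p ∈ Finset.Ico 1 k, Sp (nabla p) * Sm (nabla (k - p))) :
    ∀ k, 1 ≤ k → opNorm (nabla k) ≤ aCoeff k / (2 * s ^ 2) * x ^ k := by
  have hbase : ‖nabla 1‖ ≤ aCoeff 1 / (2 * s ^ 2) * x ^ 1 := by
    rw [hn1, aCoeff_one, ← opNorm_eq_norm]
    convert hM using 1
    ring
  exact norm_le_of_eq_sum_mul hs.le hs.le hSp hSm hnk
    (aCoeff_div_mul_pow_eq_sum hs.ne' x) hbase

/-- Recursive norm bound: if `‖S⁺‖, ‖S⁻‖ ≤ s` (induced spectral norms),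
`∇⁽¹⁾ = id` and `∇⁽ᵏ⁾[M] = ∑_{p=1}^{k-1} S⁺[∇⁽ᵖ⁾[M]] · S⁻[∇⁽ᵏ⁻ᵖ⁾[M]]` for
`k ≥ 2`, and `‖M‖ ≤ x/(4s²)`, then `‖∇⁽ᵏ⁾[M]‖ ≤ (a_k/(2s²)) xᵏ` for all
`k ≥ 1`. -/
theorem recursive_nabla_norm_bound (d : ℕ)
    (Sp Sm : Matrix (Fin d) (Fin d) ℂ →ₗ[ℂ] Matrix (Fin d) (Fin d) ℂ)
    (s x : ℝ) (hs : 0 < s) (hx : 0 < x)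
    (hSp : ∀ A, opNorm (Sp A) ≤ s * opNorm A)
    (hSm : ∀ A, opNorm (Sm A) ≤ s * opNorm A)
    (M : Matrix (Fin d) (Fin d) ℂ) (hM : opNorm M ≤ x / (4 * s ^ 2))
    (nabla : ℕ → Matrix (Fin d) (Fin d) ℂ)
    (hn1 : nabla 1 = M)
    (hnk : ∀ k, 2 ≤ k →
      nabla k = ∑ p ∈ Finset.Ico 1 k, Sp (nabla p) * Sm (nabla (k - p))) :
    ∀ k, 1 ≤ k → opNorm (nabla k) ≤ aCoeff k / (2 * s ^ 2) * x ^ k :=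
  recursive_nabla_norm_bound_general d Sp Sm s x hs hSp hSm M hM nabla hn1 hnk
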